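/- Under exchangeability and almost-sure distinctness of conformity scores, the coverage of the split conformal prediction set is also upper bounded: P(c_{n+1} < c_{(⌊(n+1)α⌋)}) = (n+1−⌊(n+1)α⌋)/(n+1) ≤ 1 − α + 1/(n+1). -/

import Mathlib

open MeasureTheory ENNReal

def Exchangeable {Ω : Type*} [MeasurableSpace Ω] (μ : Measure Ω)
    {E : Type*} [MeasurableSpace E] {m : ℕ} (Z : Fin m → Ω → E) : Prop :=
  ∀ σ : Equiv.Perm (Fin m),
    Measure.map (fun ω => fun i => Z (σ i) ω) μ = Measure.map (fun ω => fun i => Z i ω) μ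

/-- The `k`-th largest value of `f 0, …, f (n-1)` (1-indexed). -/
noncomputable def kthLargest {n : ℕ} (f : Fin n → ℝ) (k : ℕ) : ℝ :=
  (List.insertionSort (· ≥ ·) (List.ofFn f)).getD (k - 1) 0

/- ### Auxiliary lemmas -/

lemma sorted_getD_lt_iff {l : List ℝ} (hs : List.Pairwise (· ≥ ·) l) {k : ℕ}
    (hk1 : 1 ≤ k) (hk : k ≤ l.length) (x : ℝ) :
    x < l.getD (k-1) 0 ↔ k ≤ l.countP (fun a => decide (x < a)) := by
  have hlt : k - 1 < l.length := by omega
  rw [List.getD_eq_getElem l 0 hlt]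
  constructor
  · intro h
    calc k = (l.take k).length := by simp [hk]
    _ = (l.take k).countP (fun a => decide (x < a)) := by
        rw [eq_comm, List.countP_eq_length]
        intro a ha
        obtain ⟨i, hi, rfl⟩ := List.mem_iff_getElem.1 ha
        have hik : i < k := by simp at hi; omega
        have hi' : i < l.length := lt_of_lt_of_le hik hk
        rw [List.getElem_take]
        simp only [decide_eq_true_eq]
        rcases lt_or_eq_of_le (Nat.le_sub_one_of_lt hik : i ≤ k - 1) with h2 | h2
        · exact lt_of_lt_of_le h
            (hs.rel_get_of_lt (a := ⟨i, hi'⟩) (b := ⟨k-1, hlt⟩) (by simpa using h2))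
        · subst h2; exact h
    _ ≤ l.countP (fun a => decide (x < a)) := (List.take_sublist k l).countP_le
  · intro h
    by_contra hx
    push_neg at hx
    have hsplit := List.take_append_drop (k-1) l
    have : l.countP (fun a => decide (x < a)) ≤ k - 1 := by
      calc l.countP (fun a => decide (x < a))
          = (l.take (k-1)).countP _ + (l.drop (k-1)).countP (fun a => decide (x < a)) := by
            rw [← List.countP_append, hsplit]
      _ ≤ (k-1) + 0 := by
            gcongr
            · exact le_trans List.countP_le_length (by simp)
            · refine le_of_eq (List.countP_eq_zero.2 ?_)
              intro a ha
              obtain ⟨i, hi, rfl⟩ := List.mem_iff_getElem.1 ha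
              rw [List.getElem_drop]
              simp only [decide_eq_true_eq, not_lt]
              refine le_trans ?_ hx
              rcases Nat.eq_zero_or_pos i with rfl | hpos
              · simp
              · exact hs.rel_get_of_lt (a := ⟨k-1, hlt⟩)
                  (b := ⟨k-1+i, by have := hi; simp at this; omega⟩) (by simp; omega)
      _ = k - 1 := by omega
    omega

open scoped Classical in
lemma lt_kthLargest_iff {n k : ℕ} (hk1 : 1 ≤ k) (hkn : k ≤ n) (w : Fin n → ℝ) (x : ℝ) :
    x < kthLargest w k ↔ k ≤ (Finset.univ.filter fun j => x < w j).card := by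
  set l := List.insertionSort (· ≥ ·) (List.ofFn w) with hl
  have hperm : l.Perm (List.ofFn w) := List.perm_insertionSort _ _
  have hlen : l.length = n := by simp [hperm.length_eq]
  have hs : l.Pairwise (· ≥ ·) := List.pairwise_insertionSort _ _
  rw [kthLargest, ← hl, sorted_getD_lt_iff hs hk1 (by omega) x]
  rw [hperm.countP_eq, List.ofFn_eq_map, List.countP_map]
  rw [List.countP_eq_length_filter]
  simp [Fin.univ_def, Finset.filter, Finset.card, Multiset.filter_coe, Function.comp]
  exact Iff.rfl

open scoped Classical in
noncomputable def rnk {n : ℕ} (v : Fin n → ℝ) (i : Fin n) : ℕ :=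
  (Finset.univ.filter fun j => v i ≤ v j).card

open scoped Classical

lemma rnk_pos {n : ℕ} (v : Fin n → ℝ) (i : Fin n) : 1 ≤ rnk v i := by
  rw [rnk, Nat.one_le_iff_ne_zero, ← Nat.pos_iff_ne_zero, Finset.card_pos]
  exact ⟨i, by simp⟩

lemma rnk_le {n : ℕ} (v : Fin n → ℝ) (i : Fin n) : rnk v i ≤ n := by
  simpa [rnk] using Finset.card_filter_le Finset.univ (fun j => v i ≤ v j)

lemma rnk_lt_of_lt {n : ℕ} {v : Fin n → ℝ} {i j : Fin n} (h : v i < v j) :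
    rnk v j < rnk v i := by
  apply Finset.card_lt_card
  constructor
  · intro a ha; simp at ha ⊢; exact le_trans h.le ha
  · intro hsub
    have := hsub (by simp : i ∈ Finset.univ.filter fun a => v i ≤ v a)
    simp at this
    exact absurd this (not_le.2 h)

lemma rnk_inj {n : ℕ} {v : Fin n → ℝ} (hv : Function.Injective v) :
    Function.Injective (rnk v) := by
  intro i j hij
  by_contra hne
  rcases lt_trichotomy (v i) (v j) with h | h | h
  · exact absurd hij (Nat.ne_of_lt' (rnk_lt_of_lt h))
  · exact hne (hv h)
  · exact absurd hij (Nat.ne_of_lt (rnk_lt_of_lt h))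

lemma rnk_surj {n : ℕ} {v : Fin n → ℝ} (hv : Function.Injective v) {r : ℕ}
    (h1 : 1 ≤ r) (h2 : r ≤ n) : ∃ i, rnk v i = r := by
  have himg : Finset.univ.image (rnk v) = Finset.Icc 1 n := by
    apply Finset.eq_of_subset_of_card_le
    · intro r hr
      simp only [Finset.mem_image] at hr
      obtain ⟨i, _, rfl⟩ := hr
      simp [Finset.mem_Icc, rnk_pos, rnk_le]
    · rw [Finset.card_image_of_injective _ (rnk_inj hv)]
      simp
  have : r ∈ Finset.univ.image (rnk v) := by rw [himg]; simp [Finset.mem_Icc]; omega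
  simpa using this

lemma rnk_measurable {n : ℕ} (i : Fin n) : Measurable (fun v : Fin n → ℝ => rnk v i) := by
  have : (fun v : Fin n → ℝ => rnk v i)
      = fun v => ∑ j : Fin n, if v i ≤ v j then 1 else 0 := by
    funext v; rw [rnk, Finset.card_filter]
  rw [this]
  exact Finset.measurable_sum _ fun j _ =>
    Measurable.ite (measurableSet_le (measurable_pi_apply i) (measurable_pi_apply j))
      measurable_const measurable_const

lemma rnk_comp_perm {n : ℕ} (v : Fin n → ℝ) (σ : Equiv.Perm (Fin n)) (i : Fin n) :
    rnk (v ∘ σ) i = rnk v (σ i) := by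
  rw [rnk, rnk, Finset.card_filter, Finset.card_filter]
  exact Equiv.sum_comp σ (fun j => if v (σ i) ≤ v j then 1 else 0)

lemma rnk_last {n : ℕ} {v : Fin (n+1) → ℝ} (hv : Function.Injective v) :
    rnk v (Fin.last n)
      = 1 + (Finset.univ.filter fun j : Fin n => v (Fin.last n) < v j.castSucc).card := by
  rw [rnk, Finset.card_filter, Finset.card_filter, Fin.sum_univ_castSucc]
  have h1 : (if v (Fin.last n) ≤ v (Fin.last n) then 1 else 0) = 1 := by simp
  rw [h1, add_comm]
  congr 1
  apply Finset.sum_congr rfl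
  intro j _
  congr 1
  simp only [eq_iff_iff]
  constructor
  · intro h
    rcases lt_or_eq_of_le h with h | h
    · exact h
    · exfalso
      have := hv h
      have hlt : (j.castSucc : Fin (n+1)) ≠ Fin.last n := Fin.ne_last_of_lt j.castSucc_lt_last
      exact hlt this.symm
  · exact le_of_lt

/-- Bridging lemma: on injective score vectors, being below the `k`-th largest of the
first `n` coordinates is equivalent to the overall rank exceeding `k`. -/
lemma lt_kth_iff_rnk {n k : ℕ} (hk1 : 1 ≤ k) (hkn : k ≤ n) {v : Fin (n+1) → ℝ}
    (hv : Function.Injective v) :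
    v (Fin.last n) < kthLargest (fun i : Fin n => v i.castSucc) k
      ↔ k + 1 ≤ rnk v (Fin.last n) := by
  rw [lt_kthLargest_iff hk1 hkn, rnk_last hv]
  omega

/-- Split conformal coverage is also upper bounded: with a.s. tie-free exchangeable
scores, `P(c_{n+1} < c_{(⌊(n+1)α⌋)}) = (n+1-⌊(n+1)α⌋)/(n+1) ≤ 1 - α + 1/(n+1)`. -/
theorem split_conformal_upper {Ω : Type*} [MeasurableSpace Ω] (μ : Measure Ω)
    [IsProbabilityMeasure μ]
    (n : ℕ) (c : Fin (n + 1) → Ω → ℝ)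
    (hmeas : ∀ i, Measurable (c i))
    (hexch : Exchangeable μ c)
    (hdistinct : μ {ω | ∀ i j : Fin (n + 1), i ≠ j → c i ω ≠ c j ω} = 1)
    (α : ℝ) (hα : α ∈ Set.Ioo (0 : ℝ) 1)
    (hfloor : 1 ≤ ⌊((n : ℝ) + 1) * α⌋₊) :
    μ {ω | c (Fin.last n) ω <
        kthLargest (fun i : Fin n => c i.castSucc ω) ⌊((n : ℝ) + 1) * α⌋₊}
      = (((n + 1 - ⌊((n : ℝ) + 1) * α⌋₊ : ℕ) : ℝ≥0∞)) / ((n : ℝ≥0∞) + 1)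
    ∧ (((n + 1 - ⌊((n : ℝ) + 1) * α⌋₊ : ℕ) : ℝ≥0∞)) / ((n : ℝ≥0∞) + 1)
        ≤ ENNReal.ofReal (1 - α + 1 / ((n : ℝ) + 1)) := by
  obtain ⟨hα0, hα1⟩ := hα
  set k := ⌊((n : ℝ) + 1) * α⌋₊ with hkdef
  have hkR : (k : ℝ) ≤ ((n:ℝ)+1) * α := Nat.floor_le (by positivity)
  have hkn : k ≤ n := by
    have h1 : ((n:ℝ)+1) * α < (n:ℝ)+1 := by nlinarith
    have h2 : (k:ℝ) < ((n+1 : ℕ):ℝ) := by push_cast; linarith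
    have h3 : k < n+1 := by exact_mod_cast h2
    omega
  -- the score vector map
  have hZ : Measurable (fun ω (i : Fin (n+1)) => c i ω) :=
    measurable_pi_lambda _ hmeas
  set Z : Ω → (Fin (n+1) → ℝ) := fun ω i => c i ω with hZdef
  set D : Set (Fin (n+1) → ℝ) := {v | Function.Injective v} with hDdef
  have hDm : MeasurableSet D := by
    have hD2 : D = ⋂ (i) (j) (_ : i ≠ j), {v : Fin (n+1) → ℝ | v i ≠ v j} := by
      ext v
      simp only [hDdef, Set.mem_setOf_eq, Set.mem_iInter]
      constructor
      · intro h i j hne he; exact hne (h he)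
      · intro h i j he; by_contra hne; exact h i j hne he
    rw [hD2]
    refine MeasurableSet.iInter fun i => MeasurableSet.iInter fun j =>
      MeasurableSet.iInter fun _ => ?_
    exact (measurableSet_eq_fun (measurable_pi_apply i) (measurable_pi_apply j)).compl
  set S : ℕ → Fin (n+1) → Set (Fin (n+1) → ℝ) := fun r i => D ∩ {v | rnk v i = r} with hSdef
  have hSm : ∀ r i, MeasurableSet (S r i) := by
    intro r i
    refine hDm.inter ?_
    have : {v : Fin (n+1) → ℝ | rnk v i = r} = (fun v => rnk v i) ⁻¹' {r} := by
      ext v; simp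
    rw [this]
    exact rnk_measurable i (measurableSet_singleton r)
  have hZD : μ (Z ⁻¹' D) = 1 := by
    have hset : Z ⁻¹' D = {ω | ∀ i j : Fin (n + 1), i ≠ j → c i ω ≠ c j ω} := by
      ext ω
      simp only [Set.mem_preimage, hDdef, Set.mem_setOf_eq, hZdef]
      constructor
      · intro h i j hne he; exact hne (h he)
      · intro h i j he; by_contra hne; exact h i j hne he
    rw [hset]; exact hdistinct
  -- permutation invariance
  have hperm : ∀ (σ : Equiv.Perm (Fin (n+1))) (r : ℕ) (i : Fin (n+1)),
      μ (Z ⁻¹' S r (σ i)) = μ (Z ⁻¹' S r i) := by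
    intro σ r i
    have hm2 : Measurable (fun ω => fun j => c (σ j) ω) :=
      measurable_pi_lambda _ fun j => hmeas (σ j)
    have h1 : μ ((fun ω => fun j => c (σ j) ω) ⁻¹' S r i) = μ (Z ⁻¹' S r i) := by
      rw [← Measure.map_apply hm2 (hSm r i), ← Measure.map_apply hZ (hSm r i), hexch σ]
    rw [← h1]
    congr 1
    ext ω
    simp only [Set.mem_preimage]
    have hcomp : (fun j => c (σ j) ω) = (Z ω) ∘ σ := rfl
    rw [hcomp]
    simp only [hSdef, Set.mem_inter_iff, Set.mem_setOf_eq, hDdef]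
    rw [rnk_comp_perm, Equiv.injective_comp]
  -- each rank event has probability 1/(n+1)
  have hlastval : ∀ r, 1 ≤ r → r ≤ n+1 →
      μ (Z ⁻¹' S r (Fin.last n)) = (((n+1 : ℕ) : ℝ≥0∞))⁻¹ := by
    intro r hr1 hr2
    have hunion : (⋃ i, Z ⁻¹' S r i) = Z ⁻¹' D := by
      ext ω
      simp only [Set.mem_iUnion, Set.mem_preimage, hSdef, Set.mem_inter_iff, Set.mem_setOf_eq]
      constructor
      · rintro ⟨i, hi, _⟩; exact hi
      · intro hω; obtain ⟨i, hi⟩ := rnk_surj hω hr1 hr2; exact ⟨i, hω, hi⟩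
    have hdisj : Pairwise (Function.onFun Disjoint fun i => Z ⁻¹' S r i) := by
      intro i j hij
      rw [Function.onFun, Set.disjoint_left]
      intro ω h1 h2
      simp only [Set.mem_preimage, hSdef, Set.mem_inter_iff, Set.mem_setOf_eq] at h1 h2
      exact hij (rnk_inj h1.1 (h1.2.trans h2.2.symm))
    have hsum : ∑ i : Fin (n+1), μ (Z ⁻¹' S r i) = 1 := by
      rw [← tsum_fintype (L := SummationFilter.unconditional _), ← measure_iUnion hdisj (fun i => hZ (hSm r i)), hunion, hZD]
    have hall : ∀ i, μ (Z ⁻¹' S r i) = μ (Z ⁻¹' S r (Fin.last n)) := by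
      intro i
      have h := hperm (Equiv.swap i (Fin.last n)) r i
      rw [Equiv.swap_apply_left] at h
      exact h.symm
    rw [Finset.sum_congr rfl (fun i _ => hall i), Finset.sum_const, Finset.card_univ,
      Fintype.card_fin, nsmul_eq_mul] at hsum
    have hne : ((n+1 : ℕ) : ℝ≥0∞) ≠ 0 := by
      simp
    have hnetop : ((n+1 : ℕ) : ℝ≥0∞) ≠ ⊤ := by simp
    calc μ (Z ⁻¹' S r (Fin.last n))
        = (((n+1:ℕ):ℝ≥0∞))⁻¹ * (((n+1:ℕ):ℝ≥0∞) * μ (Z ⁻¹' S r (Fin.last n))) := by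
          rw [← mul_assoc, ENNReal.inv_mul_cancel hne hnetop, one_mul]
    _ = (((n+1:ℕ):ℝ≥0∞))⁻¹ := by rw [hsum, mul_one]
  -- decompose the target event
  have hDc0 : μ (Z ⁻¹' D)ᶜ = 0 := by
    rw [measure_compl (hZ hDm) (measure_ne_top μ _), hZD, measure_univ, tsub_self]
  have hEeq : μ {ω | c (Fin.last n) ω < kthLargest (fun i : Fin n => c i.castSucc ω) k}
      = μ ({ω | c (Fin.last n) ω < kthLargest (fun i : Fin n => c i.castSucc ω) k} ∩ Z ⁻¹' D) :=
    (measure_inter_conull hDc0).symm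
  have hcap : {ω | c (Fin.last n) ω < kthLargest (fun i : Fin n => c i.castSucc ω) k} ∩ Z ⁻¹' D
      = ⋃ r ∈ Finset.Icc (k+1) (n+1), Z ⁻¹' S r (Fin.last n) := by
    ext ω
    simp only [Set.mem_inter_iff, Set.mem_preimage, Set.mem_iUnion, Finset.mem_Icc,
      Set.mem_setOf_eq, hSdef, hDdef]
    constructor
    · rintro ⟨hlt, hinj⟩
      refine ⟨rnk (Z ω) (Fin.last n), ⟨?_, rnk_le _ _⟩, hinj, rfl⟩
      exact (lt_kth_iff_rnk hfloor hkn hinj).1 hlt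
    · rintro ⟨r, ⟨hr1, hr2⟩, hinj, hrnk⟩
      refine ⟨(lt_kth_iff_rnk hfloor hkn hinj).2 ?_, hinj⟩
      omega
  have hmain : μ {ω | c (Fin.last n) ω < kthLargest (fun i : Fin n => c i.castSucc ω) k}
      = (((n + 1 - k : ℕ) : ℝ≥0∞)) / ((n : ℝ≥0∞) + 1) := by
    rw [hEeq, hcap]
    have hpd : (↑(Finset.Icc (k+1) (n+1)) : Set ℕ).PairwiseDisjoint
        (fun r => Z ⁻¹' S r (Fin.last n)) := by
      intro r _ r' _ hrr'
      rw [Function.onFun, Set.disjoint_left]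
      intro ω h1 h2
      simp only [Set.mem_preimage, hSdef, Set.mem_inter_iff, Set.mem_setOf_eq] at h1 h2
      exact hrr' (h1.2.symm.trans h2.2)
    rw [measure_biUnion_finset hpd (fun r _ => hZ (hSm r (Fin.last n)))]
    have hsum2 : ∑ r ∈ Finset.Icc (k+1) (n+1), μ (Z ⁻¹' S r (Fin.last n))
        = ∑ _r ∈ Finset.Icc (k+1) (n+1), (((n+1:ℕ):ℝ≥0∞))⁻¹ :=
      Finset.sum_congr rfl (fun r hr => by
        rw [Finset.mem_Icc] at hr
        exact hlastval r (by omega) hr.2)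
    have hcard : n + 1 + 1 - (k+1) = n + 1 - k := by omega
    have hcast : ((n : ℝ≥0∞) + 1) = (((n+1:ℕ)):ℝ≥0∞) := by push_cast; ring
    rw [hsum2, Finset.sum_const, Nat.card_Icc, hcard, nsmul_eq_mul,
      ENNReal.div_eq_inv_mul, hcast]
    exact mul_comm _ _
  refine ⟨hmain, ?_⟩
  -- arithmetic upper bound
  have hpos : (0:ℝ) < (n:ℝ) + 1 := by positivity
  have hub : ((n + 1 - k : ℕ) : ℝ) / ((n:ℝ)+1) ≤ 1 - α + 1 / ((n : ℝ) + 1) := by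
    have hcast : ((n + 1 - k : ℕ) : ℝ) = (n:ℝ) + 1 - (k:ℝ) := by
      have : k ≤ n + 1 := by omega
      push_cast [Nat.cast_sub this]
      ring
    rw [hcast, div_le_iff₀ hpos]
    have hfl : ((n:ℝ)+1) * α < (k:ℝ) + 1 := Nat.lt_floor_add_one _
    have h1n : 1 / ((n:ℝ)+1) * ((n:ℝ)+1) = 1 := by field_simp
    nlinarith
  calc (((n + 1 - k : ℕ) : ℝ≥0∞)) / ((n : ℝ≥0∞) + 1)
      = ENNReal.ofReal (((n + 1 - k : ℕ) : ℝ) / ((n:ℝ)+1)) := by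
        rw [ENNReal.ofReal_div_of_pos hpos, ENNReal.ofReal_natCast]
        congr 1
        rw [show ((n:ℝ)+1) = (((n+1:ℕ)):ℝ) by push_cast; ring, ENNReal.ofReal_natCast]
        push_cast; ring
  _ ≤ ENNReal.ofReal (1 - α + 1 / ((n : ℝ) + 1)) := ENNReal.ofReal_le_ofReal hub
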